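/- Let m be an even positive integer, let f be a cyclic bent function on F_{2^{m−1}} × F_2, and for a ∈ F_{2^{m−1}}* choose ε_a ∈ F_2. Let B_∞ be the standard basis of ℂ^{2^m}, let B_0 = { 2^{−m/2} ( (−1)^{Tr^{m−1}_1(λ x₁) + ν x₂} )_{(x₁,x₂) ∈ F_{2^{m−1}} × F_2} : (λ,ν) ∈ F_{2^{m−1}} × F_2 }, and for a ∈ F_{2^{m−1}}* let B_a = { 2^{−m/2} ( (−1)^{f(a x₁, x₂ + ε_a) + Tr^{m−1}_1(λ x₁) + ν x₂} )_{(x₁,x₂)} : (λ,ν) ∈ F_{2^{m−1}} × F_2 }. Then C_f = B_∞ ∪ B_0 ∪ ⋃_{a ∈ F_{2^{m−1}}*} B_a consists of N = 2^{2m−1} + 2^m pairwise distinct unit-norm vectors in ℂ^{K} with K = 2^m, and its maximum crosscorrelation amplitude satisfies I_max(C_f) = 2^{−m/2} = √( (3N − K² − 2K) / ((N − K)(K + 2)) ); that is, C_f is a real-valued (2^{2m−1}+2^m, 2^m) codebook meeting the Levenshtein bound with equality. -/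

import Mathlib

open Finset

noncomputable section

abbrev Fq (n : ℕ) := GaloisField 2 n

noncomputable instance (n : ℕ) : Fintype (Fq n) := Fintype.ofFinite _

/-- Absolute trace from `F_{2^n}` to `F_2`. -/
noncomputable def tr1 (n : ℕ) (x : Fq n) : ZMod 2 :=
  Algebra.trace (ZMod 2) (Fq n) x

/-- `(-1)^x` for `x : F_2`, as an integer. -/
def chi (x : ZMod 2) : ℤ := (-1 : ℤ) ^ x.val

/-- Walsh transform of a Boolean function on `F_{2^n} × F_2`. -/
noncomputable def walsh (n : ℕ) (f : Fq n × ZMod 2 → ZMod 2)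
    (lam : Fq n) (nu : ZMod 2) : ℤ :=
  ∑ x : Fq n × ZMod 2, chi (f x + tr1 n (lam * x.1) + nu * x.2)

/-- A Boolean function on `F_{2^{m-1}} × F_2` is bent if all its Walsh coefficients
are `± 2^(m/2)`. -/
def IsBent (m : ℕ) (f : Fq (m - 1) × ZMod 2 → ZMod 2) : Prop :=
  ∀ lam nu, walsh (m - 1) f lam nu = 2 ^ (m / 2) ∨ walsh (m - 1) f lam nu = -(2 ^ (m / 2))

/-- Cyclic bent function on `F_{2^{m-1}} × F_2`. -/
def IsCyclicBent (m : ℕ) (f : Fq (m - 1) × ZMod 2 → ZMod 2) : Prop :=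
  ∀ a b : Fq (m - 1), a ≠ b → ∀ ε : ZMod 2,
    IsBent m fun x => f (a * x.1, x.2) + f (b * x.1, x.2 + ε)

noncomputable instance (n : ℕ) : DecidableEq (Fq n) := Classical.decEq _

/-- Vector of `B_0`: coordinates `2^{-m/2} (-1)^{Tr(λ x₁) + ν x₂}`. -/
noncomputable def cbVec0 (m : ℕ) (lam : Fq (m - 1)) (nu : ZMod 2) :
    EuclideanSpace ℂ (Fq (m - 1) × ZMod 2) :=
  WithLp.toLp 2 fun x => (-1 : ℂ) ^ (tr1 (m - 1) (lam * x.1) + nu * x.2).val / (2 : ℂ) ^ (m / 2)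

/-- Vector of `B_a` (`a ≠ 0`): coordinates
`2^{-m/2} (-1)^{f(a x₁, x₂ + ε_a) + Tr(λ x₁) + ν x₂}`. -/
noncomputable def cbVecA (m : ℕ) (f : Fq (m - 1) × ZMod 2 → ZMod 2)
    (ε : Fq (m - 1) → ZMod 2) (a lam : Fq (m - 1)) (nu : ZMod 2) :
    EuclideanSpace ℂ (Fq (m - 1) × ZMod 2) :=
  WithLp.toLp 2 fun x =>
    (-1 : ℂ) ^ (f (a * x.1, x.2 + ε a) + tr1 (m - 1) (lam * x.1) + nu * x.2).val
      / (2 : ℂ) ^ (m / 2)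

/-- The codebook `C_f = B_∞ ∪ B_0 ∪ ⋃_{a ≠ 0} B_a`. -/
noncomputable def codebookCf (m : ℕ) (f : Fq (m - 1) × ZMod 2 → ZMod 2)
    (ε : Fq (m - 1) → ZMod 2) : Set (EuclideanSpace ℂ (Fq (m - 1) × ZMod 2)) :=
  (Set.range fun p : Fq (m - 1) × ZMod 2 => EuclideanSpace.single p (1 : ℂ))
    ∪ (Set.range fun p : Fq (m - 1) × ZMod 2 => cbVec0 m p.1 p.2)
    ∪ ⋃ a ∈ {a : Fq (m - 1) | a ≠ 0},
        Set.range fun p : Fq (m - 1) × ZMod 2 => cbVecA m f ε a p.1 p.2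

/-!
Apart from the standard basis, every codeword is `2^{-m/2} ((-1)^{g x})_x` for a Boolean
function `g`, so the inner product of two such codewords is `2^{-m}` times a Walsh coefficient
of the sum of their functions. Within one block that sum is linear and the coefficient vanishes
for distinct codewords. Across blocks `B_a`, `B_b` it is, after the shift `x₂ ↦ x₂ + ε_a`,
the function `f(a x₁, x₂) + f(b x₁, x₂ + ε_a + ε_b)`, which is bent by cyclic bentness; for
`B_0` against `B_a` one takes `b = 0`, where `f(0, ·)` is affine and only moves the Walsh
spectrum. Against the standard basis every coordinate has modulus `2^{-m/2}`. Since this bound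
is below `1`, distinct indices give distinct codewords, which yields the count `N`, and the
Levenshtein identity is arithmetic in `K = 2^{m/2}`.
-/

open scoped InnerProductSpace

lemma chi_add (u v : ZMod 2) : chi (u + v) = chi u * chi v := by
  revert u v; decide

lemma chi_add_one (u : ZMod 2) : chi (u + 1) = -chi u := by
  revert u; decide

lemma abs_chi (u : ZMod 2) : |chi u| = 1 := by
  revert u; decide

lemma ZMod.eq_zero_or_eq_one (u : ZMod 2) : u = 0 ∨ u = 1 := by
  revert u; decide

lemma ZMod.two_fun_eq_affine (φ : ZMod 2 → ZMod 2) (y : ZMod 2) :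
    φ y = φ 0 + (φ 0 + φ 1) * y := by
  revert φ y; decide

lemma sum_chi_eq_zero_of_add_right {G : Type*} [AddGroup G] [Fintype G] (g : G → ZMod 2)
    (t : G) (ht : ∀ x, g (x + t) = g x + 1) : ∑ x, chi (g x) = 0 := by
  have h : ∑ x, chi (g (x + t)) = ∑ x, chi (g x) :=
    Fintype.sum_equiv (Equiv.addRight t) _ _ fun _ => rfl
  simp only [ht, chi_add_one, Finset.sum_neg_distrib] at h
  omega

lemma tr1_add (n : ℕ) (x y : Fq n) : tr1 n (x + y) = tr1 n x + tr1 n y :=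
  map_add _ x y

lemma exists_tr1_eq_one (n : ℕ) : ∃ s : Fq n, tr1 n s = 1 :=
  Algebra.trace_surjective (ZMod 2) (Fq n) 1

lemma card_Fq_prod_ZMod_two {m : ℕ} (hm : 2 ≤ m) :
    Fintype.card (Fq (m - 1) × ZMod 2) = 2 ^ m := by
  rw [Fintype.card_prod, ← Nat.card_eq_fintype_card (α := Fq (m - 1)),
    GaloisField.card 2 (m - 1) (by omega), ZMod.card, ← pow_succ, Nat.sub_add_cancel (by omega)]

section Walsh

variable {n : ℕ}

lemma walsh_zero_eq_zero_of_ne_zero {p : Fq n × ZMod 2} (hp : p ≠ 0) : walsh n 0 p.1 p.2 = 0 := by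
  obtain ⟨lam, nu⟩ := p
  obtain rfl | rfl := ZMod.eq_zero_or_eq_one nu
  · have hlam : lam ≠ 0 := fun h0 => hp (by rw [h0]; rfl)
    obtain ⟨s, hs⟩ := exists_tr1_eq_one n
    refine sum_chi_eq_zero_of_add_right _ (lam⁻¹ * s, 0) fun x => ?_
    simp [mul_add, ← mul_assoc, mul_inv_cancel₀ hlam, tr1_add, hs]
  · refine sum_chi_eq_zero_of_add_right _ (0, 1) fun x => ?_
    simp only [Prod.fst_add, Prod.snd_add, add_zero, Pi.zero_apply, zero_add, one_mul]
    ring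

lemma walsh_comp_add_right_snd (g : Fq n × ZMod 2 → ZMod 2) (e : ZMod 2) (lam : Fq n)
    (nu : ZMod 2) :
    walsh n (fun x => g (x.1, x.2 + e)) lam nu = chi (nu * e) * walsh n g lam nu := by
  rw [walsh, walsh, Finset.mul_sum]
  refine Fintype.sum_equiv (Equiv.prodCongr (Equiv.refl _) (Equiv.addRight e)) _ _
    fun ⟨x₁, x₂⟩ => ?_
  rw [← chi_add]
  congr 1
  simp only [Equiv.prodCongr_apply, Equiv.coe_refl, Equiv.coe_addRight, Prod.map_apply, id_eq]
  linear_combination (-(nu * e)) * CharTwo.two_eq_zero (R := ZMod 2)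

lemma walsh_add_affine_snd (g : Fq n × ZMod 2 → ZMod 2) (c d : ZMod 2) (lam : Fq n)
    (nu : ZMod 2) :
    walsh n (fun x => g x + (c + d * x.2)) lam nu = chi c * walsh n g lam (nu + d) := by
  rw [walsh, walsh, Finset.mul_sum]
  refine Finset.sum_congr rfl fun x _ => ?_
  rw [← chi_add]
  ring_nf

lemma sum_chi_add_eq_walsh (F G : Fq n × ZMod 2 → ZMod 2) (p q : Fq n × ZMod 2) :
    ∑ x : Fq n × ZMod 2, chi ((F x + tr1 n (p.1 * x.1) + p.2 * x.2)
        + (G x + tr1 n (q.1 * x.1) + q.2 * x.2))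
      = walsh n (F + G) (p + q).1 (p + q).2 := by
  refine Finset.sum_congr rfl fun x _ => ?_
  rw [Prod.fst_add, Prod.snd_add, Pi.add_apply, add_mul, tr1_add, add_mul]
  ring_nf

end Walsh

section Bent

variable {m : ℕ}

lemma isBent_iff_abs_walsh {g : Fq (m - 1) × ZMod 2 → ZMod 2} :
    IsBent m g ↔ ∀ lam nu, |walsh (m - 1) g lam nu| = 2 ^ (m / 2) := by
  simp only [IsBent, abs_eq (by positivity : (0 : ℤ) ≤ 2 ^ (m / 2))]

lemma IsBent.comp_add_right_snd {g : Fq (m - 1) × ZMod 2 → ZMod 2} (hg : IsBent m g)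
    (e : ZMod 2) : IsBent m fun x => g (x.1, x.2 + e) := by
  rw [isBent_iff_abs_walsh] at hg ⊢
  intro lam nu
  rw [walsh_comp_add_right_snd, abs_mul, abs_chi, one_mul, hg]

lemma IsBent.of_add_affine_snd {g : Fq (m - 1) × ZMod 2 → ZMod 2} {c d : ZMod 2}
    (hg : IsBent m fun x => g x + (c + d * x.2)) : IsBent m g := by
  rw [isBent_iff_abs_walsh] at hg ⊢
  intro lam nu
  have h := hg lam (nu + d)
  rwa [walsh_add_affine_snd, abs_mul, abs_chi, one_mul, add_assoc, CharTwo.add_self_eq_zero,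
    add_zero] at h

namespace IsCyclicBent

variable {f : Fq (m - 1) × ZMod 2 → ZMod 2}

lemma isBent_twist (hf : IsCyclicBent m f) {a : Fq (m - 1)} (ha : a ≠ 0) (e : ZMod 2) :
    IsBent m fun x => f (a * x.1, x.2 + e) := by
  -- `f (0, ·)` is affine on `F_2`, so cyclic bentness with `b = 0` applies.
  have h : IsBent m fun x => f (a * x.1, x.2) + (f (0, 0) + (f (0, 0) + f (0, 1)) * x.2) := by
    convert hf a 0 ha 0 using 3 with x
    rw [zero_mul, add_zero, ZMod.two_fun_eq_affine (fun y => f (0, y)) x.2]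
  exact h.of_add_affine_snd.comp_add_right_snd e

lemma isBent_twist_add_twist (hf : IsCyclicBent m f) {a b : Fq (m - 1)} (hab : a ≠ b)
    (ea eb : ZMod 2) :
    IsBent m fun x => f (a * x.1, x.2 + ea) + f (b * x.1, x.2 + eb) := by
  convert (hf a b hab (ea + eb)).comp_add_right_snd ea using 5 with x
  linear_combination (-ea) * CharTwo.two_eq_zero (R := ZMod 2)

end IsCyclicBent

end Bent

section SignVec

variable {X : Type*}

def signVec (k : ℕ) (g : X → ZMod 2) : EuclideanSpace ℂ X :=
  WithLp.toLp 2 fun x => (-1 : ℂ) ^ (g x).val / (2 : ℂ) ^ k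

lemma signVec_apply (k : ℕ) (g : X → ZMod 2) (x : X) :
    signVec k g x = (chi (g x) : ℂ) / 2 ^ k := by
  simp [signVec, chi]

lemma norm_signVec_apply (k : ℕ) (g : X → ZMod 2) (x : X) :
    ‖signVec k g x‖ = (2 ^ k)⁻¹ := by
  rw [signVec_apply, norm_div, Complex.norm_intCast, ← Int.cast_abs, abs_chi, norm_pow,
    Complex.norm_ofNat, Int.cast_one, one_div]

variable [Fintype X]

lemma norm_signVec {k : ℕ} (hX : Fintype.card X = 2 ^ (2 * k)) (g : X → ZMod 2) :
    ‖signVec k g‖ = 1 := by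
  rw [EuclideanSpace.norm_eq, Real.sqrt_eq_one]
  simp only [norm_signVec_apply, Finset.sum_const, Finset.card_univ, hX, nsmul_eq_mul]
  push_cast
  rw [pow_mul', inv_pow, mul_inv_cancel₀ (by positivity)]

lemma inner_signVec (k : ℕ) (g h : X → ZMod 2) :
    ⟪signVec k g, signVec k h⟫_ℂ = (∑ x, chi (g x + h x) : ℤ) / 2 ^ (2 * k) := by
  rw [PiLp.inner_apply, Int.cast_sum, Finset.sum_div]
  refine Finset.sum_congr rfl fun x _ => ?_
  rw [signVec_apply, signVec_apply, chi_add, RCLike.inner_apply, map_div₀, map_intCast, map_pow,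
    map_ofNat]
  push_cast
  ring

lemma norm_inner_signVec_le {k : ℕ} {g h : X → ZMod 2} (hgh : |∑ x, chi (g x + h x)| ≤ 2 ^ k) :
    ‖⟪signVec k g, signVec k h⟫_ℂ‖ ≤ (2 ^ k)⁻¹ := by
  rw [inner_signVec, norm_div, Complex.norm_intCast, norm_pow, Complex.norm_ofNat,
    div_le_iff₀ (by positivity), pow_mul', sq, inv_mul_cancel_left₀ (by positivity)]
  exact_mod_cast hgh

lemma norm_inner_single_signVec [DecidableEq X] (p : X) (k : ℕ) (g : X → ZMod 2) :
    ‖⟪EuclideanSpace.single p (1 : ℂ), signVec k g⟫_ℂ‖ = (2 ^ k)⁻¹ := by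
  rw [EuclideanSpace.inner_single_left, map_one, one_mul, norm_signVec_apply]

end SignVec

lemma Function.injective_of_norm_inner_lt_one {𝕜 E ι : Type*} [RCLike 𝕜] [NormedAddCommGroup E]
    [InnerProductSpace 𝕜 E] {v : ι → E} (hv : ∀ i, ‖v i‖ = 1)
    (hinner : ∀ i j, i ≠ j → ‖⟪v i, v j⟫_𝕜‖ < 1) : Function.Injective v := by
  intro i j hij
  by_contra hne
  have := hinner i j hne
  rw [hij, inner_self_eq_norm_sq_to_K, hv, RCLike.ofReal_one, one_pow, norm_one] at this
  exact lt_irrefl 1 this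

section Codebook

variable {m : ℕ}

def blockFun {n : ℕ} (f : Fq n × ZMod 2 → ZMod 2) (ε : Fq n → ZMod 2) :
    Option {a : Fq n // a ≠ 0} → Fq n × ZMod 2 → ZMod 2
  | none => 0
  | some a => fun x => f (a.1 * x.1, x.2 + ε a)

lemma IsCyclicBent.isBent_blockFun_add {f : Fq (m - 1) × ZMod 2 → ZMod 2}
    (hf : IsCyclicBent m f) (ε : Fq (m - 1) → ZMod 2) {s t : Option {a : Fq (m - 1) // a ≠ 0}}
    (hst : s ≠ t) : IsBent m (blockFun f ε s + blockFun f ε t) := by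
  match s, t, hst with
  | none, none, h => exact absurd rfl h
  | none, some b, _ => simpa [blockFun] using hf.isBent_twist b.2 (ε b)
  | some a, none, _ => simpa [blockFun] using hf.isBent_twist a.2 (ε a)
  | some a, some b, h =>
    exact hf.isBent_twist_add_twist (fun hab => h (by rw [Subtype.ext hab])) _ _

lemma IsCyclicBent.abs_walsh_blockFun_add_le {f : Fq (m - 1) × ZMod 2 → ZMod 2}
    (hf : IsCyclicBent m f) (ε : Fq (m - 1) → ZMod 2) {s t : Option {a : Fq (m - 1) // a ≠ 0}}
    {p q : Fq (m - 1) × ZMod 2} (h : (s, p) ≠ (t, q)) :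
    |walsh (m - 1) (blockFun f ε s + blockFun f ε t) (p + q).1 (p + q).2| ≤ 2 ^ (m / 2) := by
  by_cases hst : s = t
  · subst hst
    have hpq : p + q ≠ 0 := CharTwo.add_eq_zero.not.mpr fun hpq => h (by rw [hpq])
    rw [show blockFun f ε s + blockFun f ε s = 0 from funext fun x => CharTwo.add_self_eq_zero _,
      walsh_zero_eq_zero_of_ne_zero hpq, abs_zero]
    positivity
  · exact (isBent_iff_abs_walsh.mp (hf.isBent_blockFun_add ε hst) _ _).le

/-- `inl p` indexes `B_∞`, `inr (none, p)` indexes `B_0` and `inr (some a, p)` indexes `B_a`. -/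
abbrev CodeIndex (m : ℕ) : Type :=
  (Fq (m - 1) × ZMod 2) ⊕ (Option {a : Fq (m - 1) // a ≠ 0} × (Fq (m - 1) × ZMod 2))

def codeVec (m : ℕ) (f : Fq (m - 1) × ZMod 2 → ZMod 2) (ε : Fq (m - 1) → ZMod 2) :
    CodeIndex m → EuclideanSpace ℂ (Fq (m - 1) × ZMod 2)
  | .inl p => EuclideanSpace.single p 1
  | .inr (s, p) =>
    signVec (m / 2) fun x => blockFun f ε s x + tr1 (m - 1) (p.1 * x.1) + p.2 * x.2

lemma range_codeVec (f : Fq (m - 1) × ZMod 2 → ZMod 2) (ε : Fq (m - 1) → ZMod 2) :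
    Set.range (codeVec m f ε) = codebookCf m f ε := by
  have hinl (p : Fq (m - 1) × ZMod 2) : codeVec m f ε (.inl p) = EuclideanSpace.single p 1 := rfl
  have h0 (p : Fq (m - 1) × ZMod 2) : codeVec m f ε (.inr (none, p)) = cbVec0 m p.1 p.2 := by
    simp [codeVec, blockFun, cbVec0, signVec]
  have ha (a : {a : Fq (m - 1) // a ≠ 0}) (p : Fq (m - 1) × ZMod 2) :
      codeVec m f ε (.inr (some a, p)) = cbVecA m f ε a p.1 p.2 := rfl
  ext v
  simp only [codebookCf, Set.mem_union, Set.mem_iUnion, Set.mem_range, Set.mem_ofPred_eq,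
    Sum.exists, Prod.exists, Option.exists, Subtype.exists, hinl, h0, ha, or_assoc]

lemma card_codeIndex (hm : 2 ≤ m) : Fintype.card (CodeIndex m) = 2 ^ (2 * m - 1) + 2 ^ m := by
  rw [Fintype.card_sum, Fintype.card_prod (Option _),
    Fintype.card_congr (Equiv.optionSubtypeNe 0), card_Fq_prod_ZMod_two hm,
    ← Nat.card_eq_fintype_card (α := Fq (m - 1)), GaloisField.card 2 (m - 1) (by omega), ← pow_add, add_comm]
  congr 2
  omega

lemma norm_codeVec (hm : Even m) (hm2 : 2 ≤ m) (f : Fq (m - 1) × ZMod 2 → ZMod 2)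
    (ε : Fq (m - 1) → ZMod 2) :
    ∀ i, ‖codeVec m f ε i‖ = 1
  | .inl p => by simp [codeVec, PiLp.norm_single]
  | .inr _ =>
    norm_signVec (by rw [card_Fq_prod_ZMod_two hm2, Nat.two_mul_div_two_of_even hm]) _

lemma IsCyclicBent.norm_inner_codeVec_le {f : Fq (m - 1) × ZMod 2 → ZMod 2}
    (hf : IsCyclicBent m f) (ε : Fq (m - 1) → ZMod 2) :
    ∀ {i j}, i ≠ j → ‖⟪codeVec m f ε i, codeVec m f ε j⟫_ℂ‖ ≤ (2 ^ (m / 2))⁻¹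
  | .inl p, .inl q, h => by
    rw [codeVec, codeVec, EuclideanSpace.inner_single_left, PiLp.single_apply,
      if_neg (fun hpq => h (by rw [hpq])), mul_zero, norm_zero]
    positivity
  | .inl p, .inr _, _ => (norm_inner_single_signVec p _ _).le
  | .inr _, .inl q, _ => by rw [norm_inner_symm]; exact (norm_inner_single_signVec q _ _).le
  | .inr (s, p), .inr (t, q), h => by
    refine norm_inner_signVec_le ?_
    rw [sum_chi_add_eq_walsh]
    exact hf.abs_walsh_blockFun_add_le ε fun hst => h (by rw [hst])

lemma IsCyclicBent.injective_codeVec {f : Fq (m - 1) × ZMod 2 → ZMod 2} (hf : IsCyclicBent m f)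
    (hm : Even m) (hm2 : 2 ≤ m) (ε : Fq (m - 1) → ZMod 2) : Function.Injective (codeVec m f ε) :=
  Function.injective_of_norm_inner_lt_one (norm_codeVec hm hm2 f ε) fun _ _ hij =>
    (hf.norm_inner_codeVec_le ε hij).trans_lt
      (inv_lt_one_of_one_lt₀ (one_lt_pow₀ one_lt_two (by omega)))

end Codebook

def levenshteinBound (N K : ℝ) : ℝ :=
  Real.sqrt ((3 * N - K ^ 2 - 2 * K) / ((N - K) * (K + 2)))

lemma levenshteinBound_eq {m : ℕ} (hm : Even m) (hm2 : 2 ≤ m) :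
    levenshteinBound (2 ^ (2 * m - 1) + 2 ^ m) (2 ^ m) = ((2 : ℝ) ^ (m / 2))⁻¹ := by
  obtain ⟨k, rfl⟩ := hm
  have hk : (k + k) / 2 = k := by omega
  have h1 : (2 : ℝ) ^ (2 * (k + k) - 1) = (2 ^ k) ^ 4 / 2 := by
    rw [eq_div_iff two_ne_zero, ← pow_succ, ← pow_mul]; congr 1; omega
  rw [levenshteinBound, hk, h1, ← two_mul, pow_mul']
  set K : ℝ := 2 ^ k
  have hK : 0 < K := by positivity
  rw [show (3 * (K ^ 4 / 2 + K ^ 2) - (K ^ 2) ^ 2 - 2 * K ^ 2) /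
      ((K ^ 4 / 2 + K ^ 2 - K ^ 2) * (K ^ 2 + 2)) = K⁻¹ ^ 2 by field_simp; ring,
    Real.sqrt_sq (by positivity)]

/-- `C_f` is an optimal `(2^{2m-1}+2^m, 2^m)` codebook meeting the
real Levenshtein bound with equality. -/
theorem stmt6 (m : ℕ) (hm : Even m) (hm0 : 0 < m)
    (f : Fq (m - 1) × ZMod 2 → ZMod 2) (hf : IsCyclicBent m f)
    (ε : Fq (m - 1) → ZMod 2) :
    (codebookCf m f ε).ncard = 2 ^ (2 * m - 1) + 2 ^ m ∧
    (∀ c ∈ codebookCf m f ε, ‖c‖ = 1) ∧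
    (∀ c ∈ codebookCf m f ε, ∀ c' ∈ codebookCf m f ε, c ≠ c' →
      ‖(@inner ℂ _ _ c c')‖ ≤ ((2 : ℝ) ^ (m / 2))⁻¹) ∧
    (∃ c ∈ codebookCf m f ε, ∃ c' ∈ codebookCf m f ε, c ≠ c' ∧
      ‖(@inner ℂ _ _ c c')‖ = ((2 : ℝ) ^ (m / 2))⁻¹) ∧
    ((2 : ℝ) ^ (m / 2))⁻¹
      = Real.sqrt ((3 * (2 ^ (2 * m - 1) + 2 ^ m : ℝ) - (2 ^ m : ℝ) ^ 2 - 2 * 2 ^ m)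
          / (((2 ^ (2 * m - 1) + 2 ^ m : ℝ) - 2 ^ m) * (2 ^ m + 2))) := by
  have hm2 : 2 ≤ m := by obtain ⟨k, rfl⟩ := hm; omega
  have hinj := hf.injective_codeVec hm hm2 ε
  rw [← range_codeVec]
  refine ⟨?_, ?_, ?_, ?_, (levenshteinBound_eq hm hm2).symm⟩
  · rw [Set.ncard_range_of_injective hinj, Nat.card_eq_fintype_card, card_codeIndex hm2]
  · rintro _ ⟨i, rfl⟩
    exact norm_codeVec hm hm2 f ε i
  · rintro _ ⟨i, rfl⟩ _ ⟨j, rfl⟩ hij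
    exact hf.norm_inner_codeVec_le ε (ne_of_apply_ne _ hij)
  · exact ⟨_, ⟨.inl 0, rfl⟩, _, ⟨.inr (none, 0), rfl⟩, hinj.ne Sum.inl_ne_inr,
      norm_inner_single_signVec _ _ _⟩
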